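/- arXiv:math/9902048 — 2 statements merged into one kernel-verified Lean document; each statement's English description precedes it below -/
import Mathlib

section
/- Let m be an even integer and G = C_m the cyclic group of order m with generator x. Then 𝔹_G is a free abelian group of rank m/2 − 1, and the elements [x, x^i, x^{m−i−1}] for i = 1,…,m/2 − 1 form a ℤ-basis of 𝔹_G. -/
/-!
Write `G = ⟨x⟩`, `eₙ` for the class of `xⁿ` and `wt (Σ cₙ eₙ) = Σ n cₙ`, so that
`ker φ = {v | m ∣ wt v}`. Modulo `N` (which contains `eₙ + e_{m-n}`, in particular `2 e_{m/2}`),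
`e_{j+1} - (j+1) e₁ = (eⱼ - j e₁) - [x, xʲ, x^{m-j-1}] + (e_{j+1} + e_{m-j-1})`,
`e_{m-n} - (m-n) e₁ ≡ -(eₙ - n e₁) - m e₁` and `m e₁ ≡ -2 (e_{m/2} - (m/2) e₁)`;
together with `v = (v - wt v • e₁) + (wt v / m) • m e₁` this shows that the triples span `𝔹_G`.
They are independent because `2 wt - m Uⱼ`, with `Uⱼ eₙ = [j < n] + [m ≤ n + j]`, vanishes on `N`
(as `Uⱼ eₙ + Uⱼ e_{m-n} = 2`) and takes the value `m δᵢⱼ` on the `i`-th triple.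
-/

namespace SingOrbit

variable (G : Type*) [Group G]

/-- The map from conjugacy classes to the abelianization. -/
def classAb : ConjClasses G → Additive (Abelianization G) :=
  Quotient.lift (fun g : G => Additive.ofMul (Abelianization.of g)) <| by
    intro a b hab
    obtain ⟨c, hc⟩ := isConj_iff.mp (hab : IsConj a b)
    subst hc
    show Additive.ofMul (Abelianization.of a) = Additive.ofMul (Abelianization.of (c * a * c⁻¹))
    congr 1
    rw [map_mul, map_mul, map_inv, mul_comm (Abelianization.of c) (Abelianization.of a),
      mul_inv_cancel_right]

/-- Nontrivial conjugacy classes. -/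
def NCC := {c : ConjClasses G // c ≠ 1}

/-- The homomorphism `φ` from the free abelian group on the nontrivial conjugacy classes
to the abelianization, sending a conjugacy class to the image of any representative. -/
noncomputable def phi : FreeAbelianGroup (NCC G) →+ Additive (Abelianization G) :=
  FreeAbelianGroup.lift fun c => classAb G c.1

/-- The basis element of the free abelian group corresponding to a conjugacy class
(`0` for the trivial class). -/
noncomputable def clsC (c : ConjClasses G) : FreeAbelianGroup (NCC G) :=
  letI := Classical.dec (c = 1)
  if h : c = 1 then 0 else FreeAbelianGroup.of ⟨c, h⟩

/-- The basis element corresponding to the conjugacy class of a group element. -/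
noncomputable def clsF (x : G) : FreeAbelianGroup (NCC G) := clsC G (ConjClasses.mk x)

/-- The subgroup generated by the elements `x̂ + x̂⁻¹`. -/
noncomputable def NSub : AddSubgroup (FreeAbelianGroup (NCC G)) :=
  AddSubgroup.closure {a | ∃ x : G, a = clsF G x + clsF G x⁻¹}

/-- The group `𝔹_G` of singular orbit data: `(ker φ) / N`. -/
noncomputable def SOD := (phi G).ker ⧸ ((NSub G).addSubgroupOf (phi G).ker)

noncomputable instance : AddCommGroup (SOD G) :=
  inferInstanceAs (AddCommGroup ((phi G).ker ⧸ ((NSub G).addSubgroupOf (phi G).ker)))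

variable {G}

lemma classAb_mk (x : G) :
    classAb G (ConjClasses.mk x) = Additive.ofMul (Abelianization.of x) := rfl

lemma mk_eq_one_iff {x : G} : ConjClasses.mk x = 1 ↔ x = 1 := by
  rw [ConjClasses.one_eq_mk_one, ConjClasses.mk_eq_mk_iff_isConj, isConj_one_left]

lemma phi_of (c : NCC G) : phi G (FreeAbelianGroup.of c) = classAb G c.1 :=
  FreeAbelianGroup.lift_apply_of _ _

lemma phi_clsF (x : G) : phi G (clsF G x) = Additive.ofMul (Abelianization.of x) := by
  rw [clsF, clsC]
  split_ifs with h
  · have hx : x = 1 := mk_eq_one_iff.mp h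
    subst hx
    simp
  · exact (phi_of (G := G) ⟨_, h⟩).trans (classAb_mk x)

/-- The element of the free abelian group associated to a list of group elements. -/
noncomputable def sumF (l : List G) : FreeAbelianGroup (NCC G) := (l.map (clsF G)).sum

lemma sumF_nil : sumF ([] : List G) = 0 := rfl

lemma sumF_cons (a : G) (t : List G) : sumF (a :: t) = clsF G a + sumF t := by
  simp [sumF]

lemma phi_sumF (l : List G) :
    phi G (sumF l) = Additive.ofMul (Abelianization.of l.prod) := by
  induction l with
  | nil => simp [sumF_nil]
  | cons a t ih =>
    rw [sumF_cons, map_add, phi_clsF, ih, List.prod_cons, map_mul, ofMul_mul]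

lemma abOf_eq_one_iff {x : G} : Abelianization.of x = 1 ↔ x ∈ commutator G :=
  QuotientGroup.eq_one_iff x

lemma sumF_mem_ker {l : List G} (h : l.prod ∈ commutator G) : sumF l ∈ (phi G).ker := by
  rw [AddMonoidHom.mem_ker, phi_sumF, abOf_eq_one_iff.mpr h]
  rfl

/-- The singular orbit datum `[x̂₁, …, x̂_q]` associated to a list of group elements whose
product lies in the commutator subgroup. -/
noncomputable def data (l : List G) (h : l.prod ∈ commutator G) : SOD G :=
  (QuotientAddGroup.mk ⟨sumF l, sumF_mem_ker h⟩ : SOD G)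

lemma triple_pow_mem {G : Type*} [Group G] {x : G} {n a b : ℕ}
    (hx : x ^ n = 1) (h : 1 + a + b = n) :
    ([x, x ^ a, x ^ b] : List G).prod ∈ commutator G := by
  have hprod : ([x, x ^ a, x ^ b] : List G).prod = 1 := by
    have h1 : ([x, x ^ a, x ^ b] : List G).prod = x ^ (1 + a + b) := by
      simp [pow_add, mul_assoc]
    rw [h1, h, hx]
  rw [hprod]
  exact Subgroup.one_mem _

lemma clsF_one : clsF G (1 : G) = 0 :=
  dif_pos ConjClasses.one_eq_mk_one.symm

lemma clsF_out (c : NCC G) : clsF G c.1.out = FreeAbelianGroup.of c := by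
  have h : ConjClasses.mk c.1.out = c.1 := Quotient.out_eq c.1
  rw [clsF, h, clsC, dif_neg c.2]
  rfl

lemma clsF_of_ne {g : G} (h : ConjClasses.mk g ≠ 1) :
    clsF G g = FreeAbelianGroup.of (α := NCC G) ⟨_, h⟩ :=
  dif_neg h

lemma out_ne_one (c : NCC G) : c.1.out ≠ 1 := fun h => by
  have hc : ConjClasses.mk c.1.out = c.1 := Quotient.out_eq _
  rw [h, ← ConjClasses.one_eq_mk_one] at hc
  exact c.2 hc.symm

lemma sumF_triple (a b c : G) : sumF [a, b, c] = clsF G a + clsF G b + clsF G c := by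
  simp [sumF, add_assoc]

lemma clsF_add_clsF_mem_NSub {y z : G} (h : y * z = 1) : clsF G y + clsF G z ∈ NSub G :=
  AddSubgroup.subset_closure ⟨y, by rw [eq_inv_of_mul_eq_one_right h]⟩

lemma NSub_le_ker : NSub G ≤ (phi G).ker := by
  rw [NSub, AddSubgroup.closure_le]
  rintro _ ⟨y, rfl⟩
  rw [SetLike.mem_coe, AddMonoidHom.mem_ker, map_add, phi_clsF, phi_clsF, ← ofMul_mul, ← map_mul,
    mul_inv_cancel, map_one, ofMul_one]

noncomputable def liftSOD {A : Type*} [AddCommGroup A] (f : FreeAbelianGroup (NCC G) →+ A)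
    (hf : NSub G ≤ f.ker) : SOD G →+ A :=
  QuotientAddGroup.lift _ (f.comp (phi G).ker.subtype) fun _ hv =>
    hf (AddSubgroup.mem_addSubgroupOf.mp hv)

lemma liftSOD_data {A : Type*} [AddCommGroup A] (f : FreeAbelianGroup (NCC G) →+ A)
    (hf : NSub G ≤ f.ker) (l : List G) (h : l.prod ∈ commutator G) :
    liftSOD f hf (data l h) = f (sumF l) :=
  rfl

noncomputable def kerPreimage (S : AddSubgroup (SOD G)) :
    AddSubgroup (FreeAbelianGroup (NCC G)) :=
  (S.comap (QuotientAddGroup.mk' _)).map (phi G).ker.subtype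

lemma mem_kerPreimage {S : AddSubgroup (SOD G)} {v : FreeAbelianGroup (NCC G)}
    (hv : v ∈ (phi G).ker) :
    v ∈ kerPreimage S ↔ (QuotientAddGroup.mk ⟨v, hv⟩ : SOD G) ∈ S :=
  ⟨fun ⟨_, hw, hwv⟩ => by subst hwv; exact hw, fun h => ⟨⟨v, hv⟩, h, rfl⟩⟩

lemma NSub_le_kerPreimage (S : AddSubgroup (SOD G)) : NSub G ≤ kerPreimage S := by
  intro v hv
  rw [mem_kerPreimage (NSub_le_ker hv), (QuotientAddGroup.eq_zero_iff _).mpr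
    (AddSubgroup.mem_addSubgroupOf.mpr hv)]
  exact S.zero_mem

lemma sumF_mem_kerPreimage {S : AddSubgroup (SOD G)} {l : List G} {h : l.prod ∈ commutator G}
    (hS : data l h ∈ S) : sumF l ∈ kerPreimage S :=
  (mem_kerPreimage (sumF_mem_ker h)).mpr hS

lemma eq_top_of_ker_le_kerPreimage {S : AddSubgroup (SOD G)}
    (hS : (phi G).ker ≤ kerPreimage S) : S = ⊤ := by
  refine eq_top_iff.mpr fun w _ => ?_
  obtain ⟨v, rfl⟩ := QuotientAddGroup.mk_surjective w
  exact (mem_kerPreimage v.2).mp (hS v.2)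

structure IsCyclicGenerator (x : G) (m : ℕ) : Prop where
  mem_zpowers (g : G) : g ∈ Subgroup.zpowers x
  orderOf_eq : orderOf x = m
  pos : 0 < m

noncomputable def dlog (x g : G) : ℕ := sInf {n : ℕ | x ^ n = g}

noncomputable def weightHom (x : G) (f : ℕ → ℤ) : FreeAbelianGroup (NCC G) →+ ℤ :=
  FreeAbelianGroup.lift fun c => f (dlog x c.1.out)

lemma weightHom_of (x : G) (f : ℕ → ℤ) (c : NCC G) :
    weightHom x f (FreeAbelianGroup.of c) = f (dlog x c.1.out) :=
  FreeAbelianGroup.lift_apply_of _ _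

noncomputable abbrev weight (x : G) : FreeAbelianGroup (NCC G) →+ ℤ :=
  weightHom x fun n => n

namespace IsCyclicGenerator

variable {x : G} {m : ℕ} (hx : IsCyclicGenerator x m)
include hx

lemma commute (a b : G) : Commute a b := by
  obtain ⟨i, rfl⟩ := hx.mem_zpowers a
  obtain ⟨j, rfl⟩ := hx.mem_zpowers b
  exact (Commute.refl x).zpow_zpow i j

lemma out_mk (g : G) : (ConjClasses.mk g).out = g := by
  have h : ConjClasses.mk (ConjClasses.mk g).out = ConjClasses.mk g := Quotient.out_eq _
  obtain ⟨c, hc⟩ := isConj_iff.mp (ConjClasses.mk_eq_mk_iff_isConj.mp h)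
  rwa [(hx.commute c _).eq, mul_inv_cancel_right] at hc

lemma pow_eq_one_iff {n : ℕ} : x ^ n = 1 ↔ m ∣ n := by
  rw [← hx.orderOf_eq, orderOf_dvd_iff_pow_eq_one]

lemma pow_eq_pow_iff {a b : ℕ} : x ^ a = x ^ b ↔ a % m = b % m := by
  rw [pow_inj_mod, hx.orderOf_eq]

lemma pow_mul_pow_eq_one {a b : ℕ} (h : a + b = m) : x ^ a * x ^ b = 1 := by
  rw [← pow_add, h, ← hx.orderOf_eq, pow_orderOf_eq_one]

lemma pow_dlog (g : G) : x ^ dlog x g = g := by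
  have hfin : IsOfFinOrder x := orderOf_pos_iff.mp (hx.orderOf_eq ▸ hx.pos : 0 < orderOf x)
  exact Nat.sInf_mem ((hfin.mem_powers_iff_mem_zpowers).mpr (hx.mem_zpowers g))

lemma dlog_pow {n : ℕ} (hn : n < m) : dlog x (x ^ n) = n := by
  have hle : dlog x (x ^ n) ≤ n := Nat.sInf_le rfl
  have h := hx.pow_eq_pow_iff.mp (hx.pow_dlog (x ^ n))
  rwa [Nat.mod_eq_of_lt (hle.trans_lt hn), Nat.mod_eq_of_lt hn] at h

lemma dlog_lt (g : G) : dlog x g < m := by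
  refine (Nat.sInf_le ?_).trans_lt (Nat.mod_lt (dlog x g) hx.pos)
  show x ^ _ = g
  rw [hx.pow_eq_pow_iff.mpr (Nat.mod_mod _ _), hx.pow_dlog]

lemma exists_pow_eq {y : G} (hy : y ≠ 1) : ∃ n, 0 < n ∧ n < m ∧ x ^ n = y := by
  refine ⟨dlog x y, Nat.pos_of_ne_zero fun h => hy ?_, hx.dlog_lt y, hx.pow_dlog y⟩
  rw [← hx.pow_dlog y, h, pow_zero]

lemma weightHom_clsF_pow (f : ℕ → ℤ) {n : ℕ} (hn0 : 0 < n) (hn : n < m) :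
    weightHom x f (clsF G (x ^ n)) = f n := by
  have hne : ConjClasses.mk (x ^ n) ≠ 1 := fun h =>
    Nat.not_dvd_of_pos_of_lt hn0 hn (hx.pow_eq_one_iff.mp (mk_eq_one_iff.mp h))
  rw [clsF_of_ne hne]
  exact (weightHom_of x f _).trans (by rw [hx.out_mk, hx.dlog_pow hn])

lemma phi_eq_weight_smul (v : FreeAbelianGroup (NCC G)) :
    phi G v = weight x v • Additive.ofMul (Abelianization.of x) := by
  refine DFunLike.congr_fun (FreeAbelianGroup.lift_ext (phi G)
    ((zmultiplesHom _ (Additive.ofMul (Abelianization.of x))).comp (weight x)) fun c => ?_) v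
  have hc : ConjClasses.mk c.1.out = c.1 := Quotient.out_eq _
  rw [phi_of, ← hc, classAb_mk, AddMonoidHom.comp_apply, weight, weightHom_of,
    zmultiplesHom_apply, natCast_zsmul, ← ofMul_pow, ← map_pow, hx.pow_dlog]

lemma commutator_eq_bot : commutator G = ⊥ := by
  rw [commutator_def, Subgroup.commutator_eq_bot_iff_le_centralizer]
  exact fun a _ b _ => (hx.commute b a).eq

lemma dvd_weight_of_mem_ker {v : FreeAbelianGroup (NCC G)} (hv : v ∈ (phi G).ker) :
    (m : ℤ) ∣ weight x v := by
  rw [AddMonoidHom.mem_ker, hx.phi_eq_weight_smul, ← ofMul_zpow, ← map_zpow] at hv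
  have h : x ^ weight x v ∈ commutator G := abOf_eq_one_iff.mp hv
  rw [hx.commutator_eq_bot, Subgroup.mem_bot, ← orderOf_dvd_iff_zpow_eq_one, hx.orderOf_eq] at h
  exact h

end IsCyclicGenerator

def cutCount (m j n : ℕ) : ℤ :=
  (if j < n then 1 else 0) + (if m ≤ n + j then 1 else 0)

lemma cutCount_add_cutCount_sub {m j n : ℕ} (hn : n ≤ m) :
    cutCount m j n + cutCount m j (m - n) = 2 := by
  unfold cutCount
  split_ifs <;> omega

lemma cutCount_triple {m i j : ℕ} (hi : 0 < i) (him : i < m / 2) (hj : 0 < j) (hjm : j < m / 2) :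
    cutCount m j 1 + cutCount m j i + cutCount m j (m - i - 1) = if i = j then 1 else 2 := by
  unfold cutCount
  split_ifs <;> omega

noncomputable def coordHom (x : G) (m j : ℕ) : FreeAbelianGroup (NCC G) →+ ℤ :=
  2 • weight x - (m : ℤ) • weightHom x (cutCount m j)

namespace IsCyclicGenerator

variable {x : G} {m : ℕ} (hx : IsCyclicGenerator x m)
include hx

lemma coordHom_clsF_pow (j : ℕ) {n : ℕ} (hn0 : 0 < n) (hn : n < m) :
    coordHom x m j (clsF G (x ^ n)) = 2 * n - m * cutCount m j n := by
  simp only [coordHom, AddMonoidHom.sub_apply, AddMonoidHom.smul_apply, weight,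
    hx.weightHom_clsF_pow _ hn0 hn, smul_eq_mul, nsmul_eq_mul, Nat.cast_ofNat]

lemma NSub_le_ker_coordHom (j : ℕ) : NSub G ≤ (coordHom x m j).ker := by
  rw [NSub, AddSubgroup.closure_le]
  rintro _ ⟨y, rfl⟩
  rw [SetLike.mem_coe, AddMonoidHom.mem_ker]
  by_cases hy : y = 1
  · rw [hy, inv_one, clsF_one, add_zero, map_zero]
  obtain ⟨n, hn0, hn, rfl⟩ := hx.exists_pow_eq hy
  rw [← eq_inv_of_mul_eq_one_right (hx.pow_mul_pow_eq_one (Nat.add_sub_cancel' hn.le)), map_add,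
    hx.coordHom_clsF_pow j hn0 hn, hx.coordHom_clsF_pow j (by omega) (by omega)]
  have := cutCount_add_cutCount_sub (j := j) hn.le
  push_cast [hn.le]
  linear_combination (-(m : ℤ)) * this

lemma coordHom_triple {i j : ℕ} (hi : 0 < i) (him : i < m / 2) (hj : 0 < j) (hjm : j < m / 2) :
    coordHom x m j (sumF [x, x ^ i, x ^ (m - i - 1)]) = if i = j then (m : ℤ) else 0 := by
  have h1 := hx.coordHom_clsF_pow j (n := 1) one_pos (by omega)
  rw [pow_one] at h1
  rw [sumF_triple, map_add, map_add, h1, hx.coordHom_clsF_pow j hi (by omega),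
    hx.coordHom_clsF_pow j (by omega) (by omega)]
  have := cutCount_triple hi him hj hjm
  have hcast : ((m - i - 1 : ℕ) : ℤ) = m - i - 1 := by omega
  rw [hcast]
  split_ifs at this ⊢ <;> linear_combination (-(m : ℤ)) * this

section Generation

variable {K : AddSubgroup (FreeAbelianGroup (NCC G))} (hN : NSub G ≤ K)
  (hT : ∀ j, 0 < j → j < m / 2 → sumF [x, x ^ j, x ^ (m - j - 1)] ∈ K)
include hN hT

lemma clsF_pow_sub_mem_of_le_half {n : ℕ} (hn0 : 0 < n) (hn : n ≤ m / 2) :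
    clsF G (x ^ n) - (n : ℤ) • clsF G x ∈ K := by
  induction n with
  | zero => omega
  | succ j ih =>
    rcases Nat.eq_zero_or_pos j with rfl | hj
    · simp
    have hsym : clsF G (x ^ (j + 1)) + clsF G (x ^ (m - j - 1)) ∈ K :=
      hN (clsF_add_clsF_mem_NSub (hx.pow_mul_pow_eq_one (by omega)))
    have key : clsF G (x ^ (j + 1)) - ((j + 1 : ℕ) : ℤ) • clsF G x
        = (clsF G (x ^ j) - (j : ℤ) • clsF G x) - sumF [x, x ^ j, x ^ (m - j - 1)]
          + (clsF G (x ^ (j + 1)) + clsF G (x ^ (m - j - 1))) := by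
      rw [sumF_triple]
      push_cast
      module
    rw [key]
    exact add_mem (sub_mem (ih hj (by omega)) (hT j hj (by omega))) hsym

lemma smul_clsF_mem (hm : Even m) : (m : ℤ) • clsF G x ∈ K := by
  obtain ⟨k, hk⟩ := hm
  have := hx.pos
  have hhalf : m / 2 = k := by omega
  have hsym : clsF G (x ^ k) + clsF G (x ^ k) ∈ K :=
    hN (clsF_add_clsF_mem_NSub (hx.pow_mul_pow_eq_one hk.symm))
  have key : (m : ℤ) • clsF G x
      = (clsF G (x ^ k) + clsF G (x ^ k)) - 2 • (clsF G (x ^ k) - (k : ℤ) • clsF G x) := by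
    rw [hk]
    push_cast
    module
  rw [key]
  exact sub_mem hsym (nsmul_mem (hx.clsF_pow_sub_mem_of_le_half hN hT (by omega) hhalf.ge) 2)

lemma clsF_pow_sub_mem (hm : Even m) {n : ℕ} (hn0 : 0 < n) (hn : n < m) :
    clsF G (x ^ n) - (n : ℤ) • clsF G x ∈ K := by
  rcases le_or_gt n (m / 2) with hle | hgt
  · exact hx.clsF_pow_sub_mem_of_le_half hN hT hn0 hle
  have hsym : clsF G (x ^ n) + clsF G (x ^ (m - n)) ∈ K :=
    hN (clsF_add_clsF_mem_NSub (hx.pow_mul_pow_eq_one (by omega)))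
  have key : clsF G (x ^ n) - (n : ℤ) • clsF G x
      = (clsF G (x ^ n) + clsF G (x ^ (m - n)))
        - (clsF G (x ^ (m - n)) - ((m - n : ℕ) : ℤ) • clsF G x) - (m : ℤ) • clsF G x := by
    rw [Nat.cast_sub hn.le]
    module
  rw [key]
  exact sub_mem (sub_mem hsym (hx.clsF_pow_sub_mem_of_le_half hN hT (by omega) (by omega)))
    (hx.smul_clsF_mem hN hT hm)

lemma ker_le (hm : Even m) : (phi G).ker ≤ K := by
  have hred : ∀ v, v - weight x v • clsF G x ∈ K := by
    intro v
    induction v using FreeAbelianGroup.induction_on with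
    | zero => simp
    | of c =>
      obtain ⟨n, hn0, hn, hxn⟩ := hx.exists_pow_eq (out_ne_one c)
      rw [← clsF_out c, ← hxn, weight, hx.weightHom_clsF_pow _ hn0 hn]
      exact hx.clsF_pow_sub_mem hN hT hm hn0 hn
    | neg c hc =>
      rw [map_neg, neg_smul, neg_sub_neg, ← neg_sub]
      exact neg_mem hc
    | add a b ha hb =>
      rw [map_add, add_smul, add_sub_add_comm]
      exact add_mem ha hb
  intro v hv
  obtain ⟨t, ht⟩ := hx.dvd_weight_of_mem_ker hv
  have key : v = (v - weight x v • clsF G x) + t • ((m : ℤ) • clsF G x) := by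
    rw [ht, smul_smul, mul_comm t, sub_add_cancel]
  rw [key]
  exact add_mem (hred v) (zsmul_mem (hx.smul_clsF_mem hN hT hm) t)

end Generation

noncomputable def tripleDatum (i : Fin (m / 2 - 1)) : SOD G :=
  data [x, x ^ ((i : ℕ) + 1), x ^ (m - ((i : ℕ) + 1) - 1)]
    (triple_pow_mem (hx.orderOf_eq ▸ pow_orderOf_eq_one x) (by have := i.isLt; omega))

lemma linearIndependent_tripleDatum : LinearIndependent ℤ hx.tripleDatum := by
  rw [Fintype.linearIndependent_iff]
  intro g hg i
  let coord := liftSOD _ (hx.NSub_le_ker_coordHom ((i : ℕ) + 1))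
  have hcoord (k : Fin (m / 2 - 1)) : coord (hx.tripleDatum k) = if k = i then (m : ℤ) else 0 := by
    have := k.isLt
    have := i.isLt
    rw [tripleDatum, liftSOD_data, hx.coordHom_triple (by omega) (by omega) (by omega) (by omega)]
    simp [Fin.val_inj]
  have h := congrArg coord hg
  simp only [map_sum, map_zsmul, hcoord, map_zero, smul_eq_mul, mul_ite, mul_zero,
    Finset.sum_ite_eq', Finset.mem_univ, if_true] at h
  exact (mul_eq_zero.mp h).resolve_right (Int.natCast_ne_zero.mpr hx.pos.ne')

lemma span_tripleDatum (hm : Even m) : Submodule.span ℤ (Set.range hx.tripleDatum) = ⊤ := by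
  rw [← Submodule.toAddSubgroup_eq_top]
  refine eq_top_of_ker_le_kerPreimage (hx.ker_le (NSub_le_kerPreimage _) (fun j hj hjm => ?_) hm)
  obtain ⟨i, rfl⟩ : ∃ i, j = i + 1 := ⟨j - 1, by omega⟩
  exact sumF_mem_kerPreimage (Submodule.subset_span ⟨⟨i, by omega⟩, rfl⟩)

end IsCyclicGenerator

/-- for `G = C_m`, `m` even, with generator `x`, the group `𝔹_G` is free
abelian of rank `m/2 - 1` with basis `[x, x^i, x^(m-i-1)]`, `i = 1, …, m/2 - 1`. -/
theorem stmt5 (m : ℕ) (hm : Even m) (G : Type*) [Group G] [Fintype G] (x : G)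
    (hgen : ∀ g : G, g ∈ Subgroup.zpowers x) (hcard : Fintype.card G = m) :
    ∃ b : Module.Basis (Fin (m / 2 - 1)) ℤ (SOD G), ∀ i : Fin (m / 2 - 1),
      b i = data [x, x ^ ((i : ℕ) + 1), x ^ (m - ((i : ℕ) + 1) - 1)]
        (triple_pow_mem (n := m) (by rw [← hcard]; exact pow_card_eq_one)
          (by have := i.isLt; omega)) := by
  have hx : IsCyclicGenerator x m :=
    ⟨hgen, by rw [orderOf_eq_card_of_forall_mem_zpowers hgen, Nat.card_eq_fintype_card, hcard],
      hcard ▸ Fintype.card_pos⟩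
  exact ⟨.mk hx.linearIndependent_tripleDatum (hx.span_tripleDatum hm).ge,
    Module.Basis.mk_apply _ _⟩

end SingOrbit
end

section
/- For a finite group G, every element α of 𝔹_G satisfies 2α = 0 if and only if every element of G is conjugate to its inverse. -/
namespace SingOrbit

variable (G : Type*) [Group G]

variable {G}

/-!
If every `g` is conjugate to `g⁻¹`, then `2ĉ = ĉ + ĉ⁻¹ ∈ N` for every basis element `ĉ`, so
`2 • ker φ ⊆ N`. Conversely, if `ĝ ≠ ĝ⁻¹`, the functional "multiplicity of `ĝ` minus
multiplicity of `ĝ⁻¹`" vanishes on `N`, because inversion swaps the conditions `x ∈ ĝ` and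
`x⁻¹ ∈ ĝ`; but it takes the value `2 ord(g) ≠ 0` on `2 ord(g) ĝ`, and `ord(g) ĝ ∈ ker φ`.
-/

theorem forall_nsmul_eq_zero_iff_nsmul_mem {A : Type*} [AddCommGroup A] (H K : AddSubgroup A)
    (n : ℕ) : (∀ α : H ⧸ K.addSubgroupOf H, n • α = 0) ↔ ∀ x ∈ H, n • x ∈ K := by
  have key (x : H) : n • (x : H ⧸ K.addSubgroupOf H) = 0 ↔ n • (x : A) ∈ K := by
    rw [← QuotientAddGroup.mk_nsmul, QuotientAddGroup.eq_zero_iff, AddSubgroup.mem_addSubgroupOf,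
      AddSubgroup.coe_nsmul]
  constructor
  · exact fun h x hx => (key ⟨x, hx⟩).mp (h _)
  · intro h α
    induction α using QuotientAddGroup.induction_on with
    | H x => exact (key x).mpr (h x x.2)

theorem isConj_inv_inv_iff {a b : G} : IsConj a⁻¹ b⁻¹ ↔ IsConj a b := by
  have inv_of_isConj {a b : G} (h : IsConj a b) : IsConj a⁻¹ b⁻¹ := by
    obtain ⟨c, rfl⟩ := isConj_iff.mp h
    exact isConj_iff.mpr ⟨c, by group⟩
  exact ⟨fun h => by simpa using inv_of_isConj h, inv_of_isConj⟩

theorem mk_inv_eq_mk_iff {x g : G} :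
    ConjClasses.mk x⁻¹ = ConjClasses.mk g ↔ ConjClasses.mk x = ConjClasses.mk g⁻¹ := by
  simp only [ConjClasses.mk_eq_mk_iff_isConj, ← isConj_inv_inv_iff (a := x⁻¹), inv_inv]

theorem ne_one_of_not_isConj_inv {g : G} (hg : ¬IsConj g g⁻¹) : g ≠ 1 := by
  rintro rfl
  simp at hg

theorem clsF_eq_of {g : G} {c : NCC G} (hg : ConjClasses.mk g = c.1) :
    clsF G g = FreeAbelianGroup.of c := by
  rw [clsF, clsC, dif_neg (hg ▸ c.2)]
  exact congrArg _ (Subtype.ext hg)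

theorem clsF_inv_eq_clsF {g : G} (h : IsConj g g⁻¹) : clsF G g⁻¹ = clsF G g := by
  rw [clsF, ConjClasses.mk_eq_mk_iff_isConj.mpr h.symm, ← clsF]

theorem two_nsmul_mem_NSub (h : ∀ g : G, IsConj g g⁻¹) (f : FreeAbelianGroup (NCC G)) :
    2 • f ∈ NSub G := by
  induction f using FreeAbelianGroup.induction_on with
  | zero => simp only [smul_zero, zero_mem]
  | of c =>
    obtain ⟨g, hg⟩ := Quotient.exists_rep c.1
    have hsum : 2 • FreeAbelianGroup.of c = clsF G g + clsF G g⁻¹ := by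
      rw [clsF_inv_eq_clsF (h g), clsF_eq_of hg, two_nsmul]
    exact hsum ▸ AddSubgroup.subset_closure ⟨g, rfl⟩
  | neg f hf => simpa only [smul_neg] using (NSub G).neg_mem hf
  | add f₁ f₂ h₁ h₂ => simpa only [smul_add] using (NSub G).add_mem h₁ h₂

theorem orderOf_nsmul_clsF_mem_ker (g : G) : orderOf g • clsF G g ∈ (phi G).ker := by
  rw [AddMonoidHom.mem_ker, map_nsmul, phi_clsF, ← ofMul_pow, ← map_pow, pow_orderOf_eq_one,
    map_one, ofMul_one]

open Classical in
noncomputable def classCoeff (c : ConjClasses G) : FreeAbelianGroup (NCC G) →+ ℤ :=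
  FreeAbelianGroup.lift fun d => if d.1 = c then 1 else 0

open Classical in
theorem classCoeff_clsF {c : ConjClasses G} (hc : c ≠ 1) (x : G) :
    classCoeff c (clsF G x) = if ConjClasses.mk x = c then 1 else 0 := by
  rw [clsF, clsC]
  by_cases hx : ConjClasses.mk x = 1
  · rw [dif_pos hx, if_neg fun hxc : ConjClasses.mk x = c => hc (hxc ▸ hx), map_zero]
  · rw [dif_neg hx]
    exact FreeAbelianGroup.lift_apply_of _ _

noncomputable def inverseAsymmetry (g : G) : FreeAbelianGroup (NCC G) →+ ℤ :=
  classCoeff (ConjClasses.mk g) - classCoeff (ConjClasses.mk g⁻¹)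

theorem NSub_le_ker_inverseAsymmetry {g : G} (hg : g ≠ 1) :
    NSub G ≤ (inverseAsymmetry g).ker := by
  classical
  have hmk : ConjClasses.mk g ≠ 1 := mt mk_eq_one_iff.mp hg
  have hmk' : ConjClasses.mk g⁻¹ ≠ 1 := mt mk_eq_one_iff.mp (inv_ne_one.mpr hg)
  rw [NSub, AddSubgroup.closure_le]
  rintro _ ⟨x, rfl⟩
  have h₁ := mk_inv_eq_mk_iff (x := x) (g := g)
  have h₂ := mk_inv_eq_mk_iff (x := x) (g := g⁻¹)
  rw [inv_inv] at h₂
  simp only [SetLike.mem_coe, AddMonoidHom.mem_ker, inverseAsymmetry, AddMonoidHom.sub_apply,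
    map_add, classCoeff_clsF hmk, classCoeff_clsF hmk', if_congr h₁ rfl rfl,
    if_congr h₂ rfl rfl]
  ring

theorem inverseAsymmetry_clsF_self {g : G} (hg : ¬IsConj g g⁻¹) :
    inverseAsymmetry g (clsF G g) = 1 := by
  classical
  have hg1 := ne_one_of_not_isConj_inv hg
  rw [inverseAsymmetry, AddMonoidHom.sub_apply, classCoeff_clsF (mt mk_eq_one_iff.mp hg1),
    classCoeff_clsF (mt mk_eq_one_iff.mp (inv_ne_one.mpr hg1)), if_pos rfl,
    if_neg (mt ConjClasses.mk_eq_mk_iff_isConj.mp hg), sub_zero]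

theorem exists_mem_ker_two_nsmul_notMem_NSub [Finite G] {g : G} (hg : ¬IsConj g g⁻¹) :
    ∃ f ∈ (phi G).ker, 2 • f ∉ NSub G := by
  refine ⟨_, orderOf_nsmul_clsF_mem_ker g, fun hmem => ?_⟩
  have hzero := NSub_le_ker_inverseAsymmetry (ne_one_of_not_isConj_inv hg) hmem
  rw [AddMonoidHom.mem_ker, map_nsmul, map_nsmul, inverseAsymmetry_clsF_self hg] at hzero
  have : (0 : ℤ) < 2 • orderOf g • 1 := by simpa using orderOf_pos g
  exact this.ne' hzero

/-- `𝔹_G` consists of elements of order dividing two if and only if every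
element of `G` is conjugate to its inverse. -/
theorem stmt16 (G : Type*) [Group G] [Finite G] :
    (∀ α : SOD G, 2 • α = 0) ↔ (∀ g : G, IsConj g g⁻¹) := by
  refine (forall_nsmul_eq_zero_iff_nsmul_mem _ _ 2).trans ?_
  refine ⟨fun h g => ?_, fun h f _ => two_nsmul_mem_NSub h f⟩
  by_contra hg
  obtain ⟨f, hf, hnot⟩ := exists_mem_ker_two_nsmul_notMem_NSub hg
  exact hnot (h f hf)

end SingOrbit
end
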